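/- arXiv:2012.05942 — 2 statements merged into one kernel-verified Lean document; each statement's English description precedes it below -/
import Mathlib

section
/- Let μ be a Borel probability measure on ℝ^d absolutely continuous with respect to the Lebesgue measure, and let ν be a Borel probability measure on ℝ^d. Let F_n : ℝ^d → ℝ be differentiable convex functions converging pointwise on ℝ^d to a function F_∞ : ℝ^d → ℝ, and suppose the pushforwards (∇F_n)_* μ converge weakly to ν. Then F_∞ is convex, F_∞ is differentiable Lebesgue-almost everywhere, and (∇F_∞)_* μ = ν (where ∇F_∞ is defined μ-almost everywhere). -/
open MeasureTheory Filter Topology Set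

/-!
Convexity passes to pointwise limits, and a convex function on `ℝ^d` is locally Lipschitz, hence
differentiable a.e. by Rademacher's theorem. At a point `x` where `F_∞` is differentiable, the
gradient inequality gives `∇Fₙ(x)·v ≤ (Fₙ(x + t v) - Fₙ(x)) / t`, whose right side tends to the
corresponding difference quotient of `F_∞`, itself close to `∇F_∞(x)·v` for small `t`; applied to
`v` and `-v` this squeezes `∇Fₙ(x)·v → ∇F_∞(x)·v`. As `μ ≪ volume`, `∇Fₙ → ∇F_∞` holds `μ`-a.e.,
so `(∇Fₙ)_* μ` converges weakly to `(∇F_∞)_* μ`, and weak limits are unique.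
-/

section Convex

variable {E : Type*} [NormedAddCommGroup E] [NormedSpace ℝ E]

theorem ConvexOn.fderiv_apply_sub_le {f : E → ℝ} (hf : ConvexOn ℝ univ f) {x : E}
    (hx : DifferentiableAt ℝ f x) (y : E) : fderiv ℝ f x (y - x) ≤ f y - f x := by
  have hline : HasDerivAt (f ∘ AffineMap.lineMap (k := ℝ) x y) (fderiv ℝ f x (y - x)) 0 := by
    refine hx.hasFDerivAt.comp_hasDerivAt_of_eq (0 : ℝ) AffineMap.hasDerivAt_lineMap ?_
    simp
  simpa [slope_def_field] using
    (hf.comp_affineMap (AffineMap.lineMap x y)).le_slope_of_hasDerivAt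
      (mem_univ 0) (mem_univ 1) zero_lt_one hline

variable {F : ℕ → E → ℝ} {f : E → ℝ} {x : E}

theorem eventually_fderiv_apply_lt_of_tendsto (hF : ∀ n, ConvexOn ℝ univ (F n))
    (hFx : ∀ n, DifferentiableAt ℝ (F n) x) (hlim : ∀ y, Tendsto (fun n ↦ F n y) atTop (𝓝 (f y)))
    (hfx : DifferentiableAt ℝ f x) (v : E) {b : ℝ} (hb : fderiv ℝ f x v < b) :
    ∀ᶠ n in atTop, fderiv ℝ (F n) x v < b := by
  obtain ⟨t, ht, hslope⟩ : ∃ t > 0, t⁻¹ * (f (x + t • v) - f x) < b :=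
    (((hfx.hasFDerivAt.hasLineDerivAt v).tendsto_slope_zero_right.eventually
      (gt_mem_nhds hb)).and self_mem_nhdsWithin).exists.imp fun t h ↦ ⟨h.2, h.1⟩
  filter_upwards [(((hlim _).sub (hlim x)).const_mul t⁻¹).eventually (gt_mem_nhds hslope)]
    with n hn
  have hsub := (hF n).fderiv_apply_sub_le (hFx n) (x + t • v)
  rw [add_sub_cancel_left, map_smul, smul_eq_mul] at hsub
  calc fderiv ℝ (F n) x v = t⁻¹ * (t * fderiv ℝ (F n) x v) := by field_simp
    _ ≤ t⁻¹ * (F n (x + t • v) - F n x) := by gcongr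
    _ < b := hn

theorem tendsto_fderiv_apply_of_tendsto (hF : ∀ n, ConvexOn ℝ univ (F n))
    (hFx : ∀ n, DifferentiableAt ℝ (F n) x) (hlim : ∀ y, Tendsto (fun n ↦ F n y) atTop (𝓝 (f y)))
    (hfx : DifferentiableAt ℝ f x) (v : E) :
    Tendsto (fun n ↦ fderiv ℝ (F n) x v) atTop (𝓝 (fderiv ℝ f x v)) := by
  refine tendsto_order.2 ⟨fun b hb ↦ ?_, fun b hb ↦
    eventually_fderiv_apply_lt_of_tendsto hF hFx hlim hfx v hb⟩
  have hneg : fderiv ℝ f x (-v) < -b := by simpa using hb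
  filter_upwards [eventually_fderiv_apply_lt_of_tendsto hF hFx hlim hfx (-v) hneg] with n hn
  simpa using hn

end Convex

section InnerProduct

variable {E : Type*} [NormedAddCommGroup E] [InnerProductSpace ℝ E] [FiniteDimensional ℝ E]

theorem tendsto_of_forall_inner_tendsto {ι : Type*} {l : Filter ι} {u : ι → E} {a : E}
    (h : ∀ v, Tendsto (fun i ↦ inner ℝ (u i) v) l (𝓝 (inner ℝ a v))) : Tendsto u l (𝓝 a) := by
  let b := stdOrthonormalBasis ℝ E
  rw [← b.sum_repr' a, funext fun i ↦ (b.sum_repr' (u i)).symm]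
  refine tendsto_finsetSum _ fun i _ ↦ ?_
  simpa only [real_inner_comm (b i)] using (h (b i)).smul_const (b i)

theorem tendsto_gradient_of_tendsto {F : ℕ → E → ℝ} {f : E → ℝ} {x : E}
    (hF : ∀ n, ConvexOn ℝ univ (F n)) (hFx : ∀ n, DifferentiableAt ℝ (F n) x)
    (hlim : ∀ y, Tendsto (fun n ↦ F n y) atTop (𝓝 (f y))) (hfx : DifferentiableAt ℝ f x) :
    Tendsto (fun n ↦ gradient (F n) x) atTop (𝓝 (gradient f x)) :=
  tendsto_of_forall_inner_tendsto fun v ↦ by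
    simpa only [inner_gradient_left] using tendsto_fderiv_apply_of_tendsto hF hFx hlim hfx v

theorem measurable_gradient [MeasurableSpace E] [BorelSpace E] (f : E → ℝ) :
    Measurable (gradient f) :=
  (InnerProductSpace.toDual ℝ E).symm.continuous.measurable.comp (measurable_fderiv ℝ f)

end InnerProduct

section Rademacher

variable {E : Type*} [NormedAddCommGroup E] [NormedSpace ℝ E] [FiniteDimensional ℝ E]
  [MeasurableSpace E] [BorelSpace E] {μ : Measure E} [μ.IsAddHaarMeasure]
  {F : Type*} [NormedAddCommGroup F] [NormedSpace ℝ F] [FiniteDimensional ℝ F]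

theorem LocallyLipschitz.ae_differentiableAt {f : E → F} (hf : LocallyLipschitz f) :
    ∀ᵐ x ∂μ, DifferentiableAt ℝ f x := by
  choose K U hU hK using hf
  obtain ⟨s, hs, hcover⟩ :=
    TopologicalSpace.countable_cover_nhds fun x ↦ interior_mem_nhds.2 (hU x)
  have hloc : ∀ x ∈ s, ∀ᵐ y ∂μ, y ∈ interior (U x) → DifferentiableAt ℝ f y := fun x _ ↦
    ((hK x).mono interior_subset).ae_differentiableWithinAt_of_mem.mono fun y hy hyU ↦
      (hy hyU).differentiableAt (isOpen_interior.mem_nhds hyU)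
  filter_upwards [(ae_ball_iff hs).2 hloc] with y hy
  obtain ⟨x, hx, hyx⟩ := mem_iUnion₂.1 (hcover ▸ mem_univ y)
  exact hy x hx hyx

theorem ConvexOn.ae_differentiableAt {f : E → ℝ} (hf : ConvexOn ℝ univ f) :
    ∀ᵐ x ∂μ, DifferentiableAt ℝ f x :=
  hf.locallyLipschitz.ae_differentiableAt

end Rademacher

/-- If differentiable convex potentials `Fₙ` converge pointwise to `F_∞` and the gradient
pushforwards `(∇Fₙ)_* μ` converge weakly to `ν` (with `μ ≪ Lebesgue`), then `F_∞` is convex,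
differentiable Lebesgue-a.e., and `(∇F_∞)_* μ = ν`. -/
theorem limit_potential_convex_and_pushforward
    (d : ℕ) (μ ν : Measure (EuclideanSpace ℝ (Fin d)))
    [IsProbabilityMeasure μ] [IsProbabilityMeasure ν]
    (hac : μ ≪ volume)
    (F : ℕ → EuclideanSpace ℝ (Fin d) → ℝ)
    (Finf : EuclideanSpace ℝ (Fin d) → ℝ)
    (hFdiff : ∀ n, Differentiable ℝ (F n))
    (hFconv : ∀ n, ConvexOn ℝ univ (F n))
    (hlim : ∀ x, Tendsto (fun n => F n x) atTop (𝓝 (Finf x)))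
    (hweak : ∀ g : BoundedContinuousFunction (EuclideanSpace ℝ (Fin d)) ℝ,
      Tendsto (fun n => ∫ x, g x ∂(μ.map (fun x => gradient (F n) x)))
        atTop (𝓝 (∫ y, g y ∂ν))) :
    ConvexOn ℝ univ Finf ∧
    (∀ᵐ x ∂(volume : Measure (EuclideanSpace ℝ (Fin d))), DifferentiableAt ℝ Finf x) ∧
    μ.map (fun x => gradient Finf x) = ν := by
  have hconv : ConvexOn ℝ univ Finf := isClosed_setOfPred_convexOn.mem_of_tendsto
    (tendsto_pi_nhds.2 hlim) (Eventually.of_forall hFconv)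
  have hdiff := hconv.ae_differentiableAt (μ := volume)
  refine ⟨hconv, hdiff, ?_⟩
  have hgrad : ∀ᵐ x ∂μ, Tendsto (fun n ↦ gradient (F n) x) atTop (𝓝 (gradient Finf x)) :=
    Eventually.mono (hac.ae_le hdiff) fun x hx ↦
      tendsto_gradient_of_tendsto hFconv (fun n ↦ hFdiff n x) hlim hx
  have hlaw_lim := tendstoInDistribution_of_ae_tendsto
    (fun n ↦ (measurable_gradient (F n)).aemeasurable)
    (measurable_gradient Finf).aemeasurable hgrad
  -- `ν` is the law of `id` under `ν`, so `hweak` is a convergence in distribution.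
  have hlaw_ν : TendstoInDistribution (fun n ↦ gradient (F n)) atTop id (fun _ ↦ μ) ν :=
    { forall_aemeasurable := fun n ↦ (measurable_gradient (F n)).aemeasurable
      aemeasurable_limit := aemeasurable_id
      tendsto := ProbabilityMeasure.tendsto_iff_forall_integral_tendsto.2 (by simpa using hweak) }
  simpa using tendstoInDistribution_unique _ hlaw_lim hlaw_ν
end

section
/- Let μ and ν be Borel probability measures on ℝ^d with finite second moments, with μ absolutely continuous with respect to the Lebesgue measure, and let G : ℝ^d → ℝ be a convex function, differentiable μ-almost everywhere, with (∇G)_* μ = ν. Then for any measurable map g : ℝ^d → ℝ^d with g_* μ = ν, the quadratic transport cost satisfies ∫ ‖x − ∇G(x)‖² dμ(x) ≤ ∫ ‖x − g(x)‖² dμ(x); equivalently, ∫ ⟨x, ∇G(x)⟩ dμ(x) ≥ ∫ ⟨x, g(x)⟩ dμ(x), assuming x ↦ G(x) is μ-integrable and y ↦ G*(y) is ν-integrable, where G* is the Fenchel conjugate of G. That is, among all transport maps from μ to ν, the gradient of a convex potential minimizes the expected squared displacement. -/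
/-!
By Fenchel–Young, `⟪x, y⟫ ≤ G x + G* y` for all `x, y`, with equality when `y = ∇G x`.
Integrating along any transport map `g` gives `∫ ⟪x, g x⟫ dμ ≤ ∫ G dμ + ∫ G* dν`, and the
right-hand side is attained by `g = ∇G`. Since `‖x - g x‖² = ‖x‖² - 2⟪x, g x⟫ + ‖g x‖²` and the
second moments depend only on `μ` and `ν`, maximizing the correlation minimizes the cost.
-/

open MeasureTheory Filter Topology Set
open scoped RealInnerProductSpace

theorem ConvexOn.apply_sub_le_of_hasFDerivAt {F : Type*} [NormedAddCommGroup F]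
    [NormedSpace ℝ F] {f : F → ℝ} {f' : F →L[ℝ] ℝ} {x : F} (hf : ConvexOn ℝ univ f)
    (hx : HasFDerivAt f f' x) (z : F) : f' (z - x) ≤ f z - f x := by
  have hline : ConvexOn ℝ univ (f ∘ AffineMap.lineMap (k := ℝ) x z) := by
    simpa using hf.comp_affineMap (AffineMap.lineMap (k := ℝ) x z)
  have hderiv : HasDerivAt (f ∘ AffineMap.lineMap (k := ℝ) x z) (f' (z - x)) 0 := by
    have hx0 : HasFDerivAt f f' (AffineMap.lineMap (k := ℝ) x z (0 : ℝ)) := by simpa using hx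
    exact hx0.comp_hasDerivAt 0 AffineMap.hasDerivAt_lineMap
  simpa [slope] using hline.le_slope_of_hasDerivAt (mem_univ 0) (mem_univ 1) zero_lt_one hderiv

variable {E : Type*} [NormedAddCommGroup E] [InnerProductSpace ℝ E]

/-- The Fenchel conjugate `G*`. Where the supremum is infinite, `⨆` takes the junk value `0`. -/
noncomputable def fenchelConjugate (G : E → ℝ) (y : E) : ℝ :=
  ⨆ x, ⟪x, y⟫ - G x

theorem inner_le_add_fenchelConjugate {G : E → ℝ} {y : E}
    (hy : BddAbove (range fun x => ⟪x, y⟫ - G x)) (x : E) :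
    ⟪x, y⟫ ≤ G x + fenchelConjugate G y := by
  have := le_ciSup hy x
  unfold fenchelConjugate
  linarith

theorem measurableSet_setOf_bddAbove_inner_sub [MeasurableSpace E] [OpensMeasurableSpace E]
    (G : E → ℝ) : MeasurableSet {y : E | BddAbove (range fun x => ⟪x, y⟫ - G x)} := by
  have hunion : {y : E | BddAbove (range fun x => ⟪x, y⟫ - G x)}
      = ⋃ n : ℕ, ⋂ x, {y | ⟪x, y⟫ - G x ≤ n} := by
    ext y
    simp only [mem_ofPred_eq, mem_iUnion, mem_iInter, bddAbove_def, forall_mem_range]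
    exact ⟨fun ⟨b, hb⟩ => (exists_nat_ge b).imp fun n hn x => (hb x).trans hn,
      fun ⟨n, hn⟩ => ⟨n, hn⟩⟩
  rw [hunion]
  exact .iUnion fun n => (isClosed_iInter fun x =>
    isClosed_le (f := fun y => ⟪x, y⟫ - G x) (by fun_prop) continuous_const).measurableSet

section Gradient

variable [CompleteSpace E] {G : E → ℝ} {x : E}

theorem ConvexOn.inner_sub_le_inner_gradient_sub (hG : ConvexOn ℝ univ G)
    (hx : DifferentiableAt ℝ G x) (z : E) :
    ⟪z, gradient G x⟫ - G z ≤ ⟪x, gradient G x⟫ - G x := by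
  have := hG.apply_sub_le_of_hasFDerivAt (hasGradientAt_iff_hasFDerivAt.1 hx.hasGradientAt) z
  rw [InnerProductSpace.toDual_apply_apply, inner_sub_right, real_inner_comm x,
    real_inner_comm z] at this
  linarith

theorem ConvexOn.bddAbove_inner_gradient (hG : ConvexOn ℝ univ G)
    (hx : DifferentiableAt ℝ G x) :
    BddAbove (range fun z => ⟪z, gradient G x⟫ - G z) :=
  ⟨_, forall_mem_range.2 (hG.inner_sub_le_inner_gradient_sub hx)⟩

theorem ConvexOn.fenchelConjugate_gradient (hG : ConvexOn ℝ univ G)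
    (hx : DifferentiableAt ℝ G x) :
    fenchelConjugate G (gradient G x) = ⟪x, gradient G x⟫ - G x :=
  le_antisymm (ciSup_le (hG.inner_sub_le_inner_gradient_sub hx))
    (le_ciSup (hG.bddAbove_inner_gradient hx) x)

end Gradient

theorem integrable_inner_of_integrable_norm_sq {α : Type*} [MeasurableSpace α] {μ : Measure α}
    {f g : α → E} (hf : AEStronglyMeasurable f μ) (hg : AEStronglyMeasurable g μ)
    (hf2 : Integrable (fun a => ‖f a‖ ^ 2) μ) (hg2 : Integrable (fun a => ‖g a‖ ^ 2) μ) :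
    Integrable (fun a => ⟪f a, g a⟫) μ := by
  refine (hf2.add hg2).mono' (hf.inner hg) (ae_of_all _ fun a => ?_)
  show |⟪f a, g a⟫| ≤ ‖f a‖ ^ 2 + ‖g a‖ ^ 2
  nlinarith [abs_real_inner_le_norm (f a) (g a), sq_nonneg (‖f a‖ - ‖g a‖), norm_nonneg (f a),
    norm_nonneg (g a)]

section Transport

variable [MeasurableSpace E] {μ ν : Measure E}

theorem ConvexOn.integral_inner_gradient_eq {G : E → ℝ} [CompleteSpace E]
    (hG : ConvexOn ℝ univ G) (hGdiff : ∀ᵐ x ∂μ, DifferentiableAt ℝ G x)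
    (hgrad : AEMeasurable (gradient G) μ) (hgradν : μ.map (gradient G) = ν)
    (hGint : Integrable G μ) (hGstarint : Integrable (fenchelConjugate G) ν) :
    ∫ x, ⟪x, gradient G x⟫ ∂μ = ∫ x, G x ∂μ + ∫ y, fenchelConjugate G y ∂ν := by
  subst hgradν
  have hfy : ∀ᵐ x ∂μ, ⟪x, gradient G x⟫ = G x + fenchelConjugate G (gradient G x) :=
    hGdiff.mono fun x hx => by rw [hG.fenchelConjugate_gradient hx]; ring
  have hGstargrad : Integrable (fun x => fenchelConjugate G (gradient G x)) μ :=
    hGstarint.comp_aemeasurable hgrad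
  rw [integral_congr_ae hfy, integral_add hGint hGstargrad,
    integral_map hgrad hGstarint.aestronglyMeasurable]

variable [BorelSpace E] [SecondCountableTopology E] {φ : E → E}

theorem integral_norm_sub_sq_of_map_eq (hφ : AEMeasurable φ μ) (hφν : μ.map φ = ν)
    (hμ2 : Integrable (fun x => ‖x‖ ^ 2) μ) (hν2 : Integrable (fun y => ‖y‖ ^ 2) ν) :
    ∫ x, ‖x - φ x‖ ^ 2 ∂μ = ∫ x, ‖x‖ ^ 2 ∂μ - 2 * ∫ x, ⟪x, φ x⟫ ∂μ + ∫ y, ‖y‖ ^ 2 ∂ν := by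
  subst hφν
  have hφ2 : Integrable (fun x => ‖φ x‖ ^ 2) μ := hν2.comp_aemeasurable hφ
  have hinner : Integrable (fun x => 2 * ⟪x, φ x⟫) μ :=
    (integrable_inner_of_integrable_norm_sq aestronglyMeasurable_id hφ.aestronglyMeasurable
      hμ2 hφ2).const_mul 2
  simp_rw [norm_sub_sq_real]
  rw [integral_add (f := fun x => ‖x‖ ^ 2 - 2 * ⟪x, φ x⟫) (hμ2.sub hinner) hφ2,
    integral_sub hμ2 hinner, integral_const_mul, integral_map hφ hν2.aestronglyMeasurable]

theorem integral_inner_le_of_map_eq {G : E → ℝ} (hφ : AEMeasurable φ μ) (hφν : μ.map φ = ν)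
    (hμ2 : Integrable (fun x => ‖x‖ ^ 2) μ) (hν2 : Integrable (fun y => ‖y‖ ^ 2) ν)
    (hGint : Integrable G μ) (hGstarint : Integrable (fenchelConjugate G) ν)
    (hbdd : ∀ᵐ y ∂ν, BddAbove (range fun x => ⟪x, y⟫ - G x)) :
    ∫ x, ⟪x, φ x⟫ ∂μ ≤ ∫ x, G x ∂μ + ∫ y, fenchelConjugate G y ∂ν := by
  subst hφν
  have hGstarφ : Integrable (fun x => fenchelConjugate G (φ x)) μ :=
    hGstarint.comp_aemeasurable hφ
  have hbddφ : ∀ᵐ x ∂μ, BddAbove (range fun z => ⟪z, φ x⟫ - G z) :=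
    ae_of_ae_map hφ hbdd
  calc ∫ x, ⟪x, φ x⟫ ∂μ ≤ ∫ x, G x + fenchelConjugate G (φ x) ∂μ :=
        integral_mono_ae (integrable_inner_of_integrable_norm_sq aestronglyMeasurable_id
          hφ.aestronglyMeasurable hμ2 (hν2.comp_aemeasurable hφ)) (hGint.add hGstarφ)
          (hbddφ.mono fun x hx => inner_le_add_fenchelConjugate hx x)
    _ = ∫ x, G x ∂μ + ∫ y, fenchelConjugate G y ∂(μ.map φ) := by
        rw [integral_add hGint hGstarφ, integral_map hφ hGstarint.aestronglyMeasurable]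

end Transport

theorem gradient_convex_minimizes_quadratic_cost_general
    (d : ℕ) (μ ν : Measure (EuclideanSpace ℝ (Fin d)))
    [IsProbabilityMeasure ν]
    (hμ2 : Integrable (fun x => ‖x‖ ^ 2) μ) (hν2 : Integrable (fun y => ‖y‖ ^ 2) ν)
    (G : EuclideanSpace ℝ (Fin d) → ℝ) (hGconv : ConvexOn ℝ univ G)
    (hGdiff : ∀ᵐ x ∂μ, DifferentiableAt ℝ G x)
    (hGpush : μ.map (fun x => gradient G x) = ν)
    (hGint : Integrable G μ)
    (hGstarint : Integrable (fun y : EuclideanSpace ℝ (Fin d) =>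
      ⨆ x : EuclideanSpace ℝ (Fin d), (⟪x, y⟫ - G x)) ν)
    (g : EuclideanSpace ℝ (Fin d) → EuclideanSpace ℝ (Fin d))
    (hgpush : μ.map g = ν) :
    (∫ x, ‖x - gradient G x‖ ^ 2 ∂μ ≤ ∫ x, ‖x - g x‖ ^ 2 ∂μ) ∧
    (∫ x, ⟪x, g x⟫ ∂μ ≤ ∫ x, ⟪x, gradient G x⟫ ∂μ) := by
  have hgrad : AEMeasurable (gradient G) μ :=
    .of_map_ne_zero (hGpush ▸ IsProbabilityMeasure.ne_zero ν)
  have hg : AEMeasurable g μ := .of_map_ne_zero (hgpush ▸ IsProbabilityMeasure.ne_zero ν)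
  have hbdd : ∀ᵐ y ∂ν, BddAbove (range fun x => ⟪x, y⟫ - G x) := by
    rw [← hGpush]
    exact (ae_map_iff hgrad (measurableSet_setOf_bddAbove_inner_sub G)).2
      (hGdiff.mono fun x hx => hGconv.bddAbove_inner_gradient hx)
  have hgradeq := hGconv.integral_inner_gradient_eq hGdiff hgrad hGpush hGint hGstarint
  have hdual : ∫ x, ⟪x, g x⟫ ∂μ ≤ ∫ x, ⟪x, gradient G x⟫ ∂μ :=
    hgradeq ▸ integral_inner_le_of_map_eq hg hgpush hμ2 hν2 hGint hGstarint hbdd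
  refine ⟨?_, hdual⟩
  rw [integral_norm_sub_sq_of_map_eq hgrad hGpush hμ2 hν2,
    integral_norm_sub_sq_of_map_eq hg hgpush hμ2 hν2]
  linarith

/-- The gradient of a convex potential `G` transporting `μ` to `ν` minimizes the quadratic
transport cost among all transport maps: for any measurable `g` with `g_* μ = ν`,
`∫ ‖x − ∇G(x)‖² dμ ≤ ∫ ‖x − g(x)‖² dμ`, equivalently
`∫ ⟨x, g(x)⟩ dμ ≤ ∫ ⟨x, ∇G(x)⟩ dμ`. -/
theorem gradient_convex_minimizes_quadratic_cost
    (d : ℕ) (μ ν : Measure (EuclideanSpace ℝ (Fin d)))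
    [IsProbabilityMeasure μ] [IsProbabilityMeasure ν]
    (hμ2 : Integrable (fun x => ‖x‖ ^ 2) μ) (hν2 : Integrable (fun y => ‖y‖ ^ 2) ν)
    (hac : μ ≪ volume)
    (G : EuclideanSpace ℝ (Fin d) → ℝ) (hGconv : ConvexOn ℝ univ G)
    (hGdiff : ∀ᵐ x ∂μ, DifferentiableAt ℝ G x)
    (hGpush : μ.map (fun x => gradient G x) = ν)
    (hGint : Integrable G μ)
    (hGstarint : Integrable (fun y : EuclideanSpace ℝ (Fin d) =>
      ⨆ x : EuclideanSpace ℝ (Fin d), (⟪x, y⟫ - G x)) ν)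
    (g : EuclideanSpace ℝ (Fin d) → EuclideanSpace ℝ (Fin d))
    (hg : Measurable g) (hgpush : μ.map g = ν) :
    (∫ x, ‖x - gradient G x‖ ^ 2 ∂μ ≤ ∫ x, ‖x - g x‖ ^ 2 ∂μ) ∧
    (∫ x, ⟪x, g x⟫ ∂μ ≤ ∫ x, ⟪x, gradient G x⟫ ∂μ) :=
  gradient_convex_minimizes_quadratic_cost_general d μ ν hμ2 hν2 G hGconv hGdiff hGpush hGint
    hGstarint g hgpush
end
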